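/- arXiv:2601.19175 — 2 statements merged into one kernel-verified Lean document; each statement's English description precedes it below -/
import Mathlib

section
/- With R₀₀ = K₀ + P₀P₀ᵀ, R₁₁ = K₁ + P₁P₁ᵀ, R₁₀ = P₁P₀ᵀ, R₀₁ = P₀P₁ᵀ (K₀, K₁ diagonal positive definite, P₀ ∈ ℝ^{m×d}, P₁ ∈ ℝ^{(n−m)×d}), and S₀ = I_d + P₀ᵀK₀⁻¹P₀, the Schur complement satisfies R₁₁ − R₁₀ R₀₀⁻¹ R₀₁ = P₁ S₀⁻¹ P₁ᵀ + K₁. -/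
/-!
Writing `R₀₀ = K₀ + P₀P₀ᵀ`, the push-through identity `P₀ᵀ K₀⁻¹ R₀₀ = S₀ P₀ᵀ` gives
`P₀ᵀ R₀₀⁻¹ = S₀⁻¹ P₀ᵀ K₀⁻¹`, hence `P₀ᵀ R₀₀⁻¹ P₀ = S₀⁻¹ (S₀ - 1) = 1 - S₀⁻¹`. Substituting this
into the Schur complement leaves `K₁ + P₁P₁ᵀ - P₁ (1 - S₀⁻¹) P₁ᵀ = K₁ + P₁ S₀⁻¹ P₁ᵀ`.
All inverses exist because `K₀`, `R₀₀` and `S₀` are positive definite.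
-/

open Matrix

namespace Matrix

variable {n m p α : Type*} [Fintype n] [Fintype m] [DecidableEq n] [DecidableEq m] [CommRing α]
  {A : Matrix n n α} (U : Matrix n m α) (V : Matrix m n α)

lemma mul_inv_mul_add_mul (hA : IsUnit A.det) :
    V * A⁻¹ * (A + U * V) = (1 + V * A⁻¹ * U) * V := by
  rw [Matrix.mul_add, nonsing_inv_mul_cancel_right _ _ hA, Matrix.add_mul, Matrix.one_mul]
  simp only [Matrix.mul_assoc]

lemma mul_inv_add_mul (hA : IsUnit A.det) (hAUV : IsUnit (A + U * V).det)
    (hS : IsUnit (1 + V * A⁻¹ * U).det) :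
    V * (A + U * V)⁻¹ = (1 + V * A⁻¹ * U)⁻¹ * V * A⁻¹ :=
  calc V * (A + U * V)⁻¹
      = (1 + V * A⁻¹ * U)⁻¹ * ((1 + V * A⁻¹ * U) * V) * (A + U * V)⁻¹ := by
        rw [nonsing_inv_mul_cancel_left _ _ hS]
    _ = (1 + V * A⁻¹ * U)⁻¹ * V * A⁻¹ := by
        rw [← mul_inv_mul_add_mul U V hA, ← Matrix.mul_assoc, ← Matrix.mul_assoc,
          mul_nonsing_inv_cancel_right _ _ hAUV, Matrix.mul_assoc]

lemma mul_inv_add_mul_mul (hA : IsUnit A.det) (hAUV : IsUnit (A + U * V).det)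
    (hS : IsUnit (1 + V * A⁻¹ * U).det) :
    V * (A + U * V)⁻¹ * U = 1 - (1 + V * A⁻¹ * U)⁻¹ :=
  calc V * (A + U * V)⁻¹ * U
      = (1 + V * A⁻¹ * U)⁻¹ * ((1 + V * A⁻¹ * U) - 1) := by
        rw [mul_inv_add_mul U V hA hAUV hS, add_sub_cancel_left]
        simp only [Matrix.mul_assoc]
    _ = 1 - (1 + V * A⁻¹ * U)⁻¹ := by
        rw [Matrix.mul_sub, nonsing_inv_mul _ hS, Matrix.mul_one]

lemma add_mul_sub_mul_inv_add_mul_mul [Fintype p] (D : Matrix p p α) (W : Matrix p m α)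
    (Z : Matrix m p α) (hA : IsUnit A.det) (hAUV : IsUnit (A + U * V).det)
    (hS : IsUnit (1 + V * A⁻¹ * U).det) :
    (D + W * Z) - W * V * (A + U * V)⁻¹ * (U * Z) = D + W * (1 + V * A⁻¹ * U)⁻¹ * Z := by
  have hWZ : W * V * (A + U * V)⁻¹ * (U * Z) = W * (V * (A + U * V)⁻¹ * U) * Z := by
    simp only [Matrix.mul_assoc]
  rw [hWZ, mul_inv_add_mul_mul U V hA hAUV hS, Matrix.mul_sub, Matrix.sub_mul, Matrix.mul_one]
  abel

end Matrix

theorem woodbury_conditional_covariance_general {m d p : ℕ}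
    (k0 : Fin m → ℝ) (hk0 : ∀ i, 0 < k0 i)
    (K0 : Matrix (Fin m) (Fin m) ℝ) (hK0 : K0 = Matrix.diagonal k0)
    (K1 : Matrix (Fin p) (Fin p) ℝ)
    (P0 : Matrix (Fin m) (Fin d) ℝ) (P1 : Matrix (Fin p) (Fin d) ℝ)
    (S0 : Matrix (Fin d) (Fin d) ℝ) (hS0 : S0 = 1 + P0ᵀ * K0⁻¹ * P0) :
    (K1 + P1 * P1ᵀ) - (P1 * P0ᵀ) * (K0 + P0 * P0ᵀ)⁻¹ * (P0 * P1ᵀ)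
      = P1 * S0⁻¹ * P1ᵀ + K1 := by
  have hK : K0.PosDef := hK0 ▸ PosDef.diagonal hk0
  have hR : (K0 + P0 * P0ᴴ).PosDef := hK.add_posSemidef (posSemidef_self_mul_conjTranspose P0)
  have hS : (1 + P0ᴴ * K0⁻¹ * P0).PosDef :=
    PosDef.one.add_posSemidef (hK.inv.posSemidef.conjTranspose_mul_mul_same P0)
  rw [conjTranspose_eq_transpose_of_trivial] at hR hS
  rw [hS0, add_mul_sub_mul_inv_add_mul_mul _ _ _ _ _ ((isUnit_iff_isUnit_det _).1 hK.isUnit)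
    ((isUnit_iff_isUnit_det _).1 hR.isUnit) ((isUnit_iff_isUnit_det _).1 hS.isUnit), add_comm]

theorem woodbury_conditional_covariance {m d p : ℕ}
    (k0 : Fin m → ℝ) (hk0 : ∀ i, 0 < k0 i)
    (k1 : Fin p → ℝ) (hk1 : ∀ i, 0 < k1 i)
    (K0 : Matrix (Fin m) (Fin m) ℝ) (hK0 : K0 = Matrix.diagonal k0)
    (K1 : Matrix (Fin p) (Fin p) ℝ) (hK1 : K1 = Matrix.diagonal k1)
    (P0 : Matrix (Fin m) (Fin d) ℝ) (P1 : Matrix (Fin p) (Fin d) ℝ)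
    (S0 : Matrix (Fin d) (Fin d) ℝ) (hS0 : S0 = 1 + P0ᵀ * K0⁻¹ * P0) :
    (K1 + P1 * P1ᵀ) - (P1 * P0ᵀ) * (K0 + P0 * P0ᵀ)⁻¹ * (P0 * P1ᵀ)
      = P1 * S0⁻¹ * P1ᵀ + K1 :=
  woodbury_conditional_covariance_general k0 hk0 K0 hK0 K1 P0 P1 S0 hS0
end

section
/- The gradient ∇_R 𝓛(R) = ½R⁻¹ − ½R⁻¹ z zᵀ R⁻¹ is Lipschitz continuous on any set of symmetric positive definite matrices R with ‖R⁻¹‖₂ ≤ α and fixed z with ‖zzᵀ‖_F ≤ β: for any two such R₁, R₂, ‖∇𝓛(R₁) − ∇𝓛(R₂)‖_F ≤ ½(α² + 2α³β)‖R₁ − R₂‖_F. -/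
/-- Frobenius norm of a real matrix. -/
noncomputable def frobNorm {m n : ℕ} (A : Matrix (Fin m) (Fin n) ℝ) : ℝ :=
  Real.sqrt (∑ i, ∑ j, (A i j) ^ 2)

/-- `A` has spectral (ℓ2 operator) norm at most `α`. -/
def specNormLE {m : ℕ} (A : Matrix (Fin m) (Fin m) ℝ) (α : ℝ) : Prop :=
  ∀ x : Fin m → ℝ,
    Real.sqrt (∑ i, (A.mulVec x i) ^ 2) ≤ α * Real.sqrt (∑ i, (x i) ^ 2)

/-- The gradient of the Gaussian copula negative log-likelihood loss
`𝓛(R) = ½ log det R + ½ zᵀ(R⁻¹ − I)z` with respect to `R`: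
`∇_R 𝓛 = ½R⁻¹ − ½R⁻¹ z zᵀ R⁻¹`. -/
noncomputable def gradLoss {m : ℕ} (z : Fin m → ℝ)
    (R : Matrix (Fin m) (Fin m) ℝ) : Matrix (Fin m) (Fin m) ℝ :=
  (1/2 : ℝ) • R⁻¹ - (1/2 : ℝ) • (R⁻¹ * Matrix.vecMulVec z z * R⁻¹)

/-!
With `Z = z zᵀ` and `E = R₁⁻¹ - R₂⁻¹ = R₁⁻¹ (R₂ - R₁) R₂⁻¹`, the gradient difference is
`½ E - ½ (E Z R₁⁻¹ + R₂⁻¹ Z E)`. Applying the spectral bound to `B` column by column gives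
`‖A B‖_F ≤ ‖A‖₂ ‖B‖_F`, and for symmetric `A` transposition gives `‖B A‖_F ≤ ‖A‖₂ ‖B‖_F`.
Hence `‖E‖_F ≤ α² ‖R₁ - R₂‖_F` and each of the two cross terms is at most `α β ‖E‖_F`.
-/

open Matrix
open scoped Matrix.Norms.Frobenius

theorem frobNorm_eq_norm {m n : ℕ} (A : Matrix (Fin m) (Fin n) ℝ) : frobNorm A = ‖A‖ := by
  rw [frobenius_norm_def, frobNorm, Real.sqrt_eq_rpow]
  simp only [Real.norm_eq_abs, Real.rpow_two, sq_abs]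

namespace specNormLE

variable {m : ℕ} {A : Matrix (Fin m) (Fin m) ℝ} {α : ℝ}

theorem nonneg (hA : specNormLE A α) (hm : 0 < m) : 0 ≤ α := by
  have hone : 0 < Real.sqrt (∑ _i : Fin m, (1 : ℝ) ^ 2) := by simpa using hm
  exact nonneg_of_mul_nonneg_left ((Real.sqrt_nonneg _).trans (hA fun _ => 1)) hone

theorem sum_sq_mulVec_le (hA : specNormLE A α) (x : Fin m → ℝ) :
    ∑ i, (A *ᵥ x) i ^ 2 ≤ α ^ 2 * ∑ i, x i ^ 2 := by
  have h := (Real.sqrt_le_iff.mp (hA x)).2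
  rwa [mul_pow, Real.sq_sqrt (by positivity)] at h

theorem norm_mul_le (hα : 0 ≤ α) (hA : specNormLE A α) {n : ℕ}
    (B : Matrix (Fin m) (Fin n) ℝ) : ‖A * B‖ ≤ α * ‖B‖ := by
  simp only [← frobNorm_eq_norm, frobNorm]
  rw [← Real.sqrt_sq hα, ← Real.sqrt_mul (sq_nonneg α), Finset.sum_comm,
    Finset.sum_comm (f := fun i j => B i j ^ 2), Finset.mul_sum]
  exact Real.sqrt_le_sqrt <| Finset.sum_le_sum fun j _ => hA.sum_sq_mulVec_le fun i => B i j

theorem norm_mul_le_of_isSymm (hα : 0 ≤ α) (hA : specNormLE A α) (hsymm : A.IsSymm) {n : ℕ}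
    (B : Matrix (Fin n) (Fin m) ℝ) : ‖B * A‖ ≤ α * ‖B‖ := by
  simpa only [← frobenius_norm_transpose (B * A), transpose_mul, hsymm.eq,
    frobenius_norm_transpose] using hA.norm_mul_le hα Bᵀ

end specNormLE

theorem gradLoss_sub_gradLoss {m : ℕ} (z : Fin m → ℝ) (R₁ R₂ : Matrix (Fin m) (Fin m) ℝ) :
    gradLoss z R₁ - gradLoss z R₂ = (1 / 2 : ℝ) • ((R₁⁻¹ - R₂⁻¹) -
      ((R₁⁻¹ - R₂⁻¹) * vecMulVec z z * R₁⁻¹ + R₂⁻¹ * vecMulVec z z * (R₁⁻¹ - R₂⁻¹))) := by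
  simp only [gradLoss, ← smul_sub]
  congr 1
  noncomm_ring

theorem norm_inv_sub_inv_le {m : ℕ} {R₁ R₂ : Matrix (Fin m) (Fin m) ℝ} {α : ℝ} (hα : 0 ≤ α)
    (hR₁ : R₁.PosDef) (hR₂ : R₂.PosDef) (h₁ : specNormLE R₁⁻¹ α) (h₂ : specNormLE R₂⁻¹ α) :
    ‖R₁⁻¹ - R₂⁻¹‖ ≤ α ^ 2 * ‖R₁ - R₂‖ := by
  have hs₂ : R₂⁻¹.IsSymm := isHermitian_iff_isSymm.mp hR₂.inv.isHermitian
  rw [inv_sub_inv (iff_of_true hR₁.isUnit hR₂.isUnit), norm_sub_rev R₁]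
  calc ‖R₁⁻¹ * (R₂ - R₁) * R₂⁻¹‖ ≤ α * ‖R₁⁻¹ * (R₂ - R₁)‖ := h₂.norm_mul_le_of_isSymm hα hs₂ _
    _ ≤ α * (α * ‖R₂ - R₁‖) := by gcongr; exact h₁.norm_mul_le hα _
    _ = α ^ 2 * ‖R₂ - R₁‖ := by ring

theorem norm_gradLoss_sub_le {m : ℕ} (z : Fin m → ℝ) {R₁ R₂ : Matrix (Fin m) (Fin m) ℝ}
    {α β : ℝ} (hα : 0 ≤ α) (hz : ‖vecMulVec z z‖ ≤ β) (hs₁ : R₁⁻¹.IsSymm)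
    (h₁ : specNormLE R₁⁻¹ α) (h₂ : specNormLE R₂⁻¹ α) :
    ‖gradLoss z R₁ - gradLoss z R₂‖ ≤ 1 / 2 * (1 + 2 * α * β) * ‖R₁⁻¹ - R₂⁻¹‖ := by
  set Z := vecMulVec z z
  set E := R₁⁻¹ - R₂⁻¹
  have hEZR : ‖E * Z * R₁⁻¹‖ ≤ α * β * ‖E‖ :=
    calc ‖E * Z * R₁⁻¹‖ ≤ α * ‖E * Z‖ := h₁.norm_mul_le_of_isSymm hα hs₁ _
      _ ≤ α * (‖E‖ * β) := by gcongr; exact (norm_mul_le E Z).trans (by gcongr)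
      _ = α * β * ‖E‖ := by ring
  have hRZE : ‖R₂⁻¹ * Z * E‖ ≤ α * β * ‖E‖ :=
    calc ‖R₂⁻¹ * Z * E‖ ≤ α * ‖Z * E‖ := by rw [mul_assoc]; exact h₂.norm_mul_le hα _
      _ ≤ α * (β * ‖E‖) := by gcongr; exact (norm_mul_le Z E).trans (by gcongr)
      _ = α * β * ‖E‖ := by ring
  rw [gradLoss_sub_gradLoss, norm_smul, Real.norm_of_nonneg (by norm_num)]
  calc 1 / 2 * ‖E - (E * Z * R₁⁻¹ + R₂⁻¹ * Z * E)‖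
      ≤ 1 / 2 * (‖E‖ + (‖E * Z * R₁⁻¹‖ + ‖R₂⁻¹ * Z * E‖)) := by
        gcongr; exact (norm_sub_le _ _).trans (by gcongr; exact norm_add_le _ _)
    _ ≤ 1 / 2 * (1 + 2 * α * β) * ‖E‖ := by linarith

theorem gradLoss_lipschitz {m : ℕ} (z : Fin m → ℝ) (α β : ℝ)
    (hβ : frobNorm (Matrix.vecMulVec z z) ≤ β)
    (R1 R2 : Matrix (Fin m) (Fin m) ℝ)
    (hR1 : R1.PosDef) (hR2 : R2.PosDef)
    (h1 : specNormLE R1⁻¹ α) (h2 : specNormLE R2⁻¹ α) :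
    frobNorm (gradLoss z R1 - gradLoss z R2)
      ≤ (1/2) * (α ^ 2 + 2 * α ^ 3 * β) * frobNorm (R1 - R2) := by
  rcases m.eq_zero_or_pos with rfl | hm
  · simp [frobNorm]
  simp only [frobNorm_eq_norm] at hβ ⊢
  have hα : 0 ≤ α := h1.nonneg hm
  have hβ₀ : 0 ≤ β := (norm_nonneg _).trans hβ
  have hs₁ : R1⁻¹.IsSymm := isHermitian_iff_isSymm.mp hR1.inv.isHermitian
  calc ‖gradLoss z R1 - gradLoss z R2‖ ≤ 1 / 2 * (1 + 2 * α * β) * ‖R1⁻¹ - R2⁻¹‖ :=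
        norm_gradLoss_sub_le z hα hβ hs₁ h1 h2
    _ ≤ 1 / 2 * (1 + 2 * α * β) * (α ^ 2 * ‖R1 - R2‖) := by
        gcongr; exact norm_inv_sub_inv_le hα hR1 hR2 h1 h2
    _ = 1 / 2 * (α ^ 2 + 2 * α ^ 3 * β) * ‖R1 - R2‖ := by ring
end
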